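/- Let G = (V, E, w) be a finite weighted graph with nonnegative edge weights, Δ, T ∈ ℝ^V with Δ ≥ 0 and Tᵢ = 1 for all i, and let x* be an optimal solution of min xᵀLx + xᵀ(T−Δ) subject to x ≥ 0, where L is the weighted graph Laplacian. Assume x* satisfies the complementary slackness property: x*ᵢ > 0 implies Δᵢ + Σ_{j∼i} w(i,j)(x*ⱼ − x*ᵢ) = Tᵢ = 1. Then |supp(x*)| ≤ Σᵢ Δᵢ. -/

import Mathlib

/-!
Summing the net inflow `∑ⱼ w i j (x j - x i)` over all nodes gives zero by symmetry of `w`.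
Nodes outside the support have nonnegative inflow, so the support has nonpositive total inflow.
By complementary slackness each node of the support settles exactly one unit, i.e. `1 = Δ i + inflow i`,
so `|supp x| = ∑_{supp x} Δ + inflow(supp x) ≤ ∑ Δ`.
-/

open Finset

section NetFlow

variable {V R : Type*} [Fintype V] [CommRing R]

def netInflow (w : V → V → R) (x : V → R) (i : V) : R :=
  ∑ j, w i j * (x j - x i)

theorem sum_netInflow_eq_zero {w : V → V → R} (hsym : ∀ i j, w i j = w j i) (x : V → R) :
    ∑ i, netInflow w x i = 0 := by
  have hswap : ∑ i, ∑ j, w i j * x j = ∑ i, ∑ j, w i j * x i := by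
    rw [sum_comm]
    simp only [hsym]
  simp only [netInflow, mul_sub, sum_sub_distrib, hswap, sub_self]

variable [LinearOrder R] [IsStrictOrderedRing R]

theorem netInflow_nonneg_of_eq_zero {w : V → V → R} (hw : ∀ i j, 0 ≤ w i j) {x : V → R}
    (hx : ∀ i, 0 ≤ x i) {i : V} (hxi : x i = 0) : 0 ≤ netInflow w x i :=
  sum_nonneg fun j _ => mul_nonneg (hw i j) (by rw [hxi, sub_zero]; exact hx j)

theorem sum_netInflow_support_nonpos [DecidableEq V] {w : V → V → R} (hw : ∀ i j, 0 ≤ w i j)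
    (hsym : ∀ i j, w i j = w j i) {x : V → R} (hx : ∀ i, 0 ≤ x i) :
    ∑ i ∈ univ.filter (fun i => x i ≠ 0), netInflow w x i ≤ 0 := by
  have houtside : 0 ≤ ∑ i ∈ (univ.filter (fun i => x i ≠ 0))ᶜ, netInflow w x i :=
    sum_nonneg fun i hi => netInflow_nonneg_of_eq_zero hw hx (by simpa using hi)
  have htotal := sum_add_sum_compl (univ.filter (fun i => x i ≠ 0)) (netInflow w x)
  rw [sum_netInflow_eq_zero hsym] at htotal
  linarith

end NetFlow

theorem stmt_5_general {V : Type*} [Fintype V] [DecidableEq V]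
    (w : V → V → ℝ) (hw : ∀ i j, 0 ≤ w i j) (hsym : ∀ i j, w i j = w j i)
    (Δ x : V → ℝ) (hΔ : ∀ i, 0 ≤ Δ i) (hx : ∀ i, 0 ≤ x i)
    (hcs : ∀ i, 0 < x i → Δ i + ∑ j, w i j * (x j - x i) = 1) :
    ((univ.filter (fun i => x i ≠ 0)).card : ℝ) ≤ ∑ i, Δ i := by
  set S := univ.filter (fun i => x i ≠ 0)
  have hsettled : ∀ i ∈ S, Δ i + netInflow w x i = 1 := fun i hi =>
    hcs i ((hx i).lt_of_ne (Ne.symm (mem_filter.mp hi).2))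
  have hcard : (S.card : ℝ) = ∑ i ∈ S, Δ i + ∑ i ∈ S, netInflow w x i := by
    rw [← sum_add_distrib, sum_congr rfl hsettled, sum_const, nsmul_one]
  have hΔS : ∑ i ∈ S, Δ i ≤ ∑ i, Δ i :=
    sum_le_sum_of_subset_of_nonneg (subset_univ S) fun i _ _ => hΔ i
  linarith [sum_netInflow_support_nonpos hw hsym hx]

/-- For an optimal solution `x*` of the `ℓ2`-norm flow diffusion problem on a finite
weighted graph with unit sink capacities, complementary slackness implies
`|supp(x*)| ≤ Σᵢ Δᵢ`. -/
theorem stmt_5 {V : Type*} [Fintype V] [DecidableEq V]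
    (w : V → V → ℝ) (hw : ∀ i j, 0 ≤ w i j) (hsym : ∀ i j, w i j = w j i)
    (Δ x : V → ℝ) (hΔ : ∀ i, 0 ≤ Δ i) (hx : ∀ i, 0 ≤ x i)
    (hopt : ∀ y : V → ℝ, (∀ i, 0 ≤ y i) →
      (∑ i, x i * ∑ j, w i j * (x i - x j)) + ∑ i, x i * (1 - Δ i)
        ≤ (∑ i, y i * ∑ j, w i j * (y i - y j)) + ∑ i, y i * (1 - Δ i))
    (hcs : ∀ i, 0 < x i → Δ i + ∑ j, w i j * (x j - x i) = 1) :
    ((univ.filter (fun i => x i ≠ 0)).card : ℝ) ≤ ∑ i, Δ i :=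
  stmt_5_general w hw hsym Δ x hΔ hx hcs
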